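/- arXiv:1204.2722 — 3 statements merged into one kernel-verified Lean document; each statement's English description precedes it below -/
import Mathlib

section
/- Let σ be the set of 15 five-fold Kronecker products of matrices from {σ₀, σ₁, σ₃} given by all cyclic permutations of the strings (σ₀,σ₁,σ₁,σ₁,σ₃), (σ₀,σ₃,σ₁,σ₁,σ₃), and (σ₀,σ₃,σ₁,σ₃,σ₃), and for a 32×32 density matrix ρ define Q(ρ) = ∑_{s∈σ} (Re(trace(ρ * s)))². Then for every fully separable 5-qubit state — i.e., every ρ of the form ρ = ∑_k p_k • (ρ_k^{(1)} ⊗ ρ_k^{(2)} ⊗ ρ_k^{(3)} ⊗ ρ_k^{(4)} ⊗ ρ_k^{(5)}) with p_k ≥ 0, ∑_k p_k = 1, and each ρ_k^{(m)} a 2×2 density matrix — one has Q(ρ) ≤ 1. -/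
open Matrix
open ComplexOrder

/-- The 2×2 identity matrix `σ₀`. -/
noncomputable def pauli0 : Matrix (Fin 2) (Fin 2) ℂ := 1

/-- The Pauli matrix `σ₁ = x`. -/
noncomputable def pauli1 : Matrix (Fin 2) (Fin 2) ℂ := !![0, 1; 1, 0]

/-- The Pauli matrix `σ₃ = z`. -/
noncomputable def pauli3 : Matrix (Fin 2) (Fin 2) ℂ := !![1, 0; 0, -1]

/-- The five-fold Kronecker product of single-qubit matrices, as a 32×32 matrix
indexed by `Fin 5 → Fin 2`. -/
noncomputable def kron5 (M : Fin 5 → Matrix (Fin 2) (Fin 2) ℂ) :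
    Matrix (Fin 5 → Fin 2) (Fin 5 → Fin 2) ℂ :=
  Matrix.of fun i j => ∏ m, M m (i m) (j m)

/-- The three base words `1xxxz`, `1zxxz`, `1zxzz`. -/
noncomputable def baseWord : Fin 3 → Fin 5 → Matrix (Fin 2) (Fin 2) ℂ
  | 0 => ![pauli0, pauli1, pauli1, pauli1, pauli3]
  | 1 => ![pauli0, pauli3, pauli1, pauli1, pauli3]
  | 2 => ![pauli0, pauli3, pauli1, pauli3, pauli3]

/-- The element of σ obtained as the `k`-th cyclic permutation of the `w`-th base
word; as `w` ranges over `Fin 3` and `k` over `Fin 5` this enumerates the 15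
(pairwise distinct) elements of σ = CP(1xxxz) ∪ CP(1zxxz) ∪ CP(1zxzz). -/
noncomputable def sigmaOp (w : Fin 3) (k : Fin 5) :
    Matrix (Fin 5 → Fin 2) (Fin 5 → Fin 2) ℂ :=
  kron5 (fun m => baseWord w (m + k))

/-- `Q(ρ) = ∑_{s ∈ σ} (Re tr(ρ s))²`. -/
noncomputable def Q (ρ : Matrix (Fin 5 → Fin 2) (Fin 5 → Fin 2) ℂ) : ℝ :=
  ∑ w : Fin 3, ∑ k : Fin 5, ((ρ * sigmaOp w k).trace.re) ^ 2

/-- A density matrix: positive semidefinite with trace 1. -/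
def IsDensityMatrix {n : Type*} [Fintype n] [DecidableEq n]
    (ρ : Matrix n n ℂ) : Prop :=
  ρ.PosSemidef ∧ ρ.trace = 1

open Finset

/-!
`Q` is a sum of squares of real-linear functionals, hence convex, so it suffices to treat product
states `ρ₁ ⊗ ⋯ ⊗ ρ₅`. For these, `tr(ρ s)` is the product of the single-qubit expectations `1`,
`x_m`, `z_m` of the letters of `s`; they are real, with `x_m² + z_m² ≤ 1` (Bloch ball). The
weights `x_m², z_m², 1 - x_m² - z_m²` on `{0, 1, 2}` therefore define a product probability
measure on `Fin 5 → Fin 3`, in which `tr(ρ s)²` is the mass of a box: σ₁ pins the coordinate to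
`0`, σ₃ pins it to `1`, σ₀ leaves it free. Any two distinct words of σ have σ₁ against σ₃ at some
position, so the 15 boxes are disjoint and their masses add up to at most `1`.
-/

theorem Finset.sum_prod_sum_le_one_of_pairwiseDisjoint {ι κ α : Type*} [Fintype κ]
    [DecidableEq κ] [Fintype α] (v : κ → α → ℝ) (hv : ∀ m a, 0 ≤ v m a)
    (hv1 : ∀ m, ∑ a, v m a = 1) (s : Finset ι) (T : ι → κ → Finset α)
    (hT : (s : Set ι).PairwiseDisjoint fun i => Fintype.piFinset (T i)) :
    ∑ i ∈ s, ∏ m, ∑ a ∈ T i m, v m a ≤ 1 := by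
  classical
  have hnonneg (u : κ → α) : 0 ≤ ∏ m, v m (u m) := prod_nonneg fun m _ => hv m (u m)
  calc ∑ i ∈ s, ∏ m, ∑ a ∈ T i m, v m a
      = ∑ u ∈ s.biUnion fun i => Fintype.piFinset (T i), ∏ m, v m (u m) := by
        rw [sum_biUnion hT]
        simp only [prod_univ_sum]
    _ ≤ ∑ u : κ → α, ∏ m, v m (u m) := sum_le_univ_sum_of_nonneg hnonneg
    _ = 1 := by rw [← Fintype.prod_sum]; simp [hv1]

theorem ConvexOn.sum {𝕜 E β ι : Type*} [Semiring 𝕜] [PartialOrder 𝕜] [AddCommMonoid E]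
    [AddCommMonoid β] [PartialOrder β] [IsOrderedAddMonoid β] [SMul 𝕜 E] [Module 𝕜 β]
    {s : Set E} (hs : Convex 𝕜 s) {t : Finset ι} {f : ι → E → β}
    (hf : ∀ i ∈ t, ConvexOn 𝕜 s (f i)) : ConvexOn 𝕜 s (∑ i ∈ t, f i) :=
  sum_induction f (ConvexOn 𝕜 s) (fun _ _ => ConvexOn.add) (convexOn_const 0 hs) hf

def Matrix.piKron {ι R : Type*} [Fintype ι] [CommMonoid R] {n : ι → Type*}
    (M : ∀ i, Matrix (n i) (n i) R) : Matrix (∀ i, n i) (∀ i, n i) R :=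
  of fun a b => ∏ i, M i (a i) (b i)

section PiKron
variable {ι R : Type*} [Fintype ι] [DecidableEq ι] [CommSemiring R] {n : ι → Type*}
  [∀ i, Fintype (n i)]

theorem Matrix.piKron_mul_piKron (A B : ∀ i, Matrix (n i) (n i) R) :
    piKron A * piKron B = piKron fun i => A i * B i := by
  ext a b
  simp only [piKron, mul_apply, of_apply, Fintype.prod_sum, prod_mul_distrib]

theorem Matrix.trace_piKron (A : ∀ i, Matrix (n i) (n i) R) :
    (piKron A).trace = ∏ i, (A i).trace := by
  simp only [trace, diag, piKron, of_apply, Fintype.prod_sum]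

theorem Matrix.trace_piKron_mul_piKron (A B : ∀ i, Matrix (n i) (n i) R) :
    (piKron A * piKron B).trace = ∏ i, (A i * B i).trace := by
  rw [piKron_mul_piKron, trace_piKron]

end PiKron

theorem Matrix.IsHermitian.ofReal_re_trace_mul {n : Type*} [Fintype n] {A B : Matrix n n ℂ}
    (hA : A.IsHermitian) (hB : B.IsHermitian) :
    (((A * B).trace.re : ℝ) : ℂ) = (A * B).trace := by
  rw [← Complex.conj_eq_iff_re, ← Complex.star_def, ← trace_conjTranspose, conjTranspose_mul,
    hA.eq, hB.eq, trace_mul_comm]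

theorem Matrix.re_trace_piKron_mul_piKron {ι : Type*} [Fintype ι] [DecidableEq ι]
    {n : ι → Type*} [∀ i, Fintype (n i)] {A B : ∀ i, Matrix (n i) (n i) ℂ}
    (hA : ∀ i, (A i).IsHermitian) (hB : ∀ i, (B i).IsHermitian) :
    (piKron A * piKron B).trace.re = ∏ i, (A i * B i).trace.re := by
  rw [trace_piKron_mul_piKron, ← prod_congr rfl fun i _ => (hA i).ofReal_re_trace_mul (hB i),
    ← Complex.ofReal_prod, Complex.ofReal_re]

theorem kron5_eq_piKron : kron5 = piKron := rfl

noncomputable def letterMatrix : Fin 3 → Matrix (Fin 2) (Fin 2) ℂ := ![pauli0, pauli1, pauli3]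

def wordCode : Fin 3 → Fin 5 → Fin 3 := ![![0, 1, 1, 1, 2], ![0, 2, 1, 1, 2], ![0, 2, 1, 2, 2]]

theorem baseWord_eq_letterMatrix (w : Fin 3) (m : Fin 5) :
    baseWord w m = letterMatrix (wordCode w m) := by
  fin_cases w <;> fin_cases m <;> rfl

def letterSupport : Fin 3 → Finset (Fin 3) := ![univ, {0}, {1}]

noncomputable def blochWeight (ρ : Matrix (Fin 2) (Fin 2) ℂ) : Fin 3 → ℝ :=
  ![(ρ * pauli1).trace.re ^ 2, (ρ * pauli3).trace.re ^ 2,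
    1 - (ρ * pauli1).trace.re ^ 2 - (ρ * pauli3).trace.re ^ 2]

section Qubit
variable {ρ : Matrix (Fin 2) (Fin 2) ℂ}

theorem isHermitian_pauli1 : pauli1.IsHermitian := by
  ext i j; fin_cases i <;> fin_cases j <;> simp [pauli1]

theorem isHermitian_pauli3 : pauli3.IsHermitian := by
  ext i j; fin_cases i <;> fin_cases j <;> simp [pauli3]

theorem isHermitian_letterMatrix (c : Fin 3) : (letterMatrix c).IsHermitian := by
  fin_cases c
  exacts [isHermitian_one, isHermitian_pauli1, isHermitian_pauli3]

theorem trace_mul_pauli1 : (ρ * pauli1).trace = ρ 0 1 + ρ 1 0 := by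
  simp [trace, mul_apply, pauli1, Fin.sum_univ_two]

theorem trace_mul_pauli3 : (ρ * pauli3).trace = ρ 0 0 - ρ 1 1 := by
  simp [trace, mul_apply, pauli3, Fin.sum_univ_two, sub_eq_add_neg]

theorem IsDensityMatrix.re_trace_mul_pauli1_sq_add_re_trace_mul_pauli3_sq_le_one
    (h : IsDensityMatrix ρ) : (ρ * pauli1).trace.re ^ 2 + (ρ * pauli3).trace.re ^ 2 ≤ 1 := by
  have hH := h.1.isHermitian
  have h10 : ρ 1 0 = star (ρ 0 1) := (hH.apply 1 0).symm
  have hdiag (i : Fin 2) : (ρ i i).im = 0 := by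
    have := congrArg Complex.im (hH.apply i i)
    simp only [Complex.star_def, Complex.conj_im] at this
    linarith
  have htr : (ρ 0 0).re + (ρ 1 1).re = 1 := by
    simpa [trace, Fin.sum_univ_two] using congrArg Complex.re h.2
  have hdet : (ρ 0 1).re ^ 2 + (ρ 0 1).im ^ 2 ≤ (ρ 0 0).re * (ρ 1 1).re := by
    have := (Complex.le_def.mp h.1.det_nonneg).1
    simp only [det_fin_two, h10, hdiag, RCLike.star_def, Complex.zero_re, Complex.sub_re,
      Complex.mul_re, Complex.conj_re, Complex.conj_im, mul_zero, sub_zero, mul_neg,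
      sub_neg_eq_add, sub_nonneg] at this
    nlinarith
  rw [trace_mul_pauli1, trace_mul_pauli3, h10]
  simp only [Complex.add_re, Complex.sub_re, Complex.star_def, Complex.conj_re]
  nlinarith [sq_nonneg (ρ 0 1).im]

theorem IsDensityMatrix.blochWeight_nonneg (h : IsDensityMatrix ρ) (a : Fin 3) :
    0 ≤ blochWeight ρ a := by
  have := h.re_trace_mul_pauli1_sq_add_re_trace_mul_pauli3_sq_le_one
  fin_cases a
  exacts [sq_nonneg _, sq_nonneg _, by simp only [blochWeight, Fin.reduceFinMk, Matrix.cons_val]; linarith]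

theorem sum_blochWeight : ∑ a, blochWeight ρ a = 1 := by
  simp [blochWeight, Fin.sum_univ_three]

theorem IsDensityMatrix.re_trace_mul_letterMatrix_sq (h : IsDensityMatrix ρ) (c : Fin 3) :
    (ρ * letterMatrix c).trace.re ^ 2 = ∑ a ∈ letterSupport c, blochWeight ρ a := by
  fin_cases c
  · simp [letterMatrix, letterSupport, pauli0, h.2, sum_blochWeight]
  all_goals simp [letterMatrix, letterSupport, blochWeight]

end Qubit

theorem pairwiseDisjoint_wordBoxes :
    ((univ : Finset (Fin 3 × Fin 5)) : Set (Fin 3 × Fin 5)).PairwiseDisjoint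
      fun i => Fintype.piFinset fun m => letterSupport (wordCode i.1 (m + i.2)) := by
  intro i _ j _ hij
  have clash : ∀ i j : Fin 3 × Fin 5, i ≠ j → ∃ m,
      Disjoint (letterSupport (wordCode i.1 (m + i.2))) (letterSupport (wordCode j.1 (m + j.2))) := by
    decide
  obtain ⟨m, hm⟩ := clash i j hij
  exact Fintype.piFinset_disjoint_of_disjoint _ _ hm

theorem Q_kron5_le_one (ρ5 : Fin 5 → Matrix (Fin 2) (Fin 2) ℂ)
    (h : ∀ m, IsDensityMatrix (ρ5 m)) : Q (kron5 ρ5) ≤ 1 := by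
  have hterm (w : Fin 3) (k : Fin 5) : (kron5 ρ5 * sigmaOp w k).trace.re ^ 2
      = ∏ m, ∑ a ∈ letterSupport (wordCode w (m + k)), blochWeight (ρ5 m) a := by
    rw [sigmaOp, kron5_eq_piKron, re_trace_piKron_mul_piKron (fun m => (h m).1.isHermitian)
      (fun m => baseWord_eq_letterMatrix w (m + k) ▸ isHermitian_letterMatrix _), ← prod_pow]
    simp only [baseWord_eq_letterMatrix, (h _).re_trace_mul_letterMatrix_sq]
  simp only [Q, hterm, ← Fintype.sum_prod_type']
  exact sum_prod_sum_le_one_of_pairwiseDisjoint _ (fun m => (h m).blochWeight_nonneg)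
    (fun _ => sum_blochWeight) _ _ pairwiseDisjoint_wordBoxes

theorem convexOn_Q : ConvexOn ℝ Set.univ Q := by
  have hQ : Q = ∑ w, ∑ k, fun ρ =>
      (Complex.reLm ∘ₗ traceLinearMap _ ℝ ℂ ∘ₗ LinearMap.mulRight ℝ (sigmaOp w k)) ρ ^ 2 := by
    ext ρ
    simp [Q, Finset.sum_apply]
  rw [hQ]
  exact ConvexOn.sum convex_univ fun w _ => ConvexOn.sum convex_univ fun k _ =>
    (even_two.convexOn_pow (𝕜 := ℝ)).comp_linearMap _

/-- For every fully separable 5-qubit state, `Q(ρ) ≤ 1`. -/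
theorem fully_separable_Q_le_one {K : ℕ}
    (p : Fin K → ℝ) (hp : ∀ k, 0 ≤ p k) (hp1 : ∑ k, p k = 1)
    (ρs : Fin K → Fin 5 → Matrix (Fin 2) (Fin 2) ℂ)
    (hρs : ∀ k m, IsDensityMatrix (ρs k m))
    (ρ : Matrix (Fin 5 → Fin 2) (Fin 5 → Fin 2) ℂ)
    (hρ : ρ = ∑ k, (p k : ℂ) • kron5 (ρs k)) :
    Q ρ ≤ 1 := by
  have hρ' : ρ = ∑ k, p k • kron5 (ρs k) := by simp only [hρ, Complex.coe_smul]
  calc Q ρ ≤ ∑ k, p k • Q (kron5 (ρs k)) :=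
        hρ' ▸ convexOn_Q.map_sum_le (fun k _ => hp k) hp1 fun _ _ => Set.mem_univ _
    _ ≤ ∑ k, p k • (1 : ℝ) :=
        sum_le_sum fun k _ => smul_le_smul_of_nonneg_left (Q_kron5_le_one _ (hρs k)) (hp k)
    _ = 1 := by simp [hp1]
end

section
/- Let s₁ = σ₃⊗σ₁⊗σ₁⊗σ₃⊗σ₀, s₂ = σ₁⊗σ₁⊗σ₃⊗σ₀⊗σ₃, s₃ = σ₁⊗σ₃⊗σ₀⊗σ₃⊗σ₁, s₄ = σ₃⊗σ₀⊗σ₃⊗σ₁⊗σ₁, s₅ = σ₀⊗σ₃⊗σ₁⊗σ₁⊗σ₃ (the operators zxxz1, xxz1z, xz1zx, z1zxx, 1zxxz). Then (i) the matrices s₁,…,s₅ pairwise commute, and (ii) letting σ be the set of 15 five-fold Kronecker products given by all cyclic permutations of (σ₀,σ₁,σ₁,σ₁,σ₃), (σ₀,σ₃,σ₁,σ₁,σ₃), and (σ₀,σ₃,σ₁,σ₃,σ₃), and Q(ρ) = ∑_{s∈σ} (Re(trace(ρ * s)))², there exists a 32×32 density matrix ρ with Q(ρ) ≥ 5. -/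
open Matrix
open ComplexOrder

noncomputable def pauli13 : Matrix (Fin 2) (Fin 2) ℂ := !![0, -1; 1, 0]

theorem pauli1_mul_self : pauli1 * pauli1 = 1 := by
  simp [pauli1, Matrix.one_fin_two]

theorem pauli3_mul_self : pauli3 * pauli3 = 1 := by
  simp [pauli3, Matrix.one_fin_two]

theorem pauli1_mul_pauli3 : pauli1 * pauli3 = pauli13 := by
  simp [pauli1, pauli3, pauli13]

theorem pauli3_mul_pauli1 : pauli3 * pauli1 = -pauli13 := by
  simp [pauli1, pauli3, pauli13]

theorem pauli1_mul_pauli13 : pauli1 * pauli13 = pauli3 := by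
  simp [pauli1, pauli3, pauli13]

theorem pauli3_mul_pauli13 : pauli3 * pauli13 = -pauli1 := by
  simp [pauli1, pauli3, pauli13]

theorem trace_pauli1 : pauli1.trace = 0 := by simp [pauli1, Matrix.trace_fin_two]

theorem trace_pauli3 : pauli3.trace = 0 := by simp [pauli3, Matrix.trace_fin_two]

theorem trace_pauli13 : pauli13.trace = 0 := by simp [pauli13, Matrix.trace_fin_two]

theorem isSelfAdjoint_pauli1 : IsSelfAdjoint pauli1 := by
  ext i j; fin_cases i <;> fin_cases j <;> simp [pauli1]

theorem isSelfAdjoint_pauli3 : IsSelfAdjoint pauli3 := by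
  ext i j; fin_cases i <;> fin_cases j <;> simp [pauli3]

section Kron5

variable (M N : Fin 5 → Matrix (Fin 2) (Fin 2) ℂ)

theorem kron5_mul : kron5 M * kron5 N = kron5 fun m => M m * N m := by
  ext i j
  simp only [kron5, Matrix.mul_apply, Matrix.of_apply, Finset.prod_univ_sum,
    Fintype.piFinset_univ, ← Finset.prod_mul_distrib]

theorem trace_kron5 : (kron5 M).trace = ∏ m, (M m).trace := by
  simp only [Matrix.trace, Matrix.diag, kron5, Matrix.of_apply, Finset.prod_univ_sum,
    Fintype.piFinset_univ]

theorem conjTranspose_kron5 : (kron5 M)ᴴ = kron5 fun m => (M m)ᴴ := by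
  ext i j
  simp [kron5, Matrix.conjTranspose_apply]

theorem kron5_smul (c : Fin 5 → ℂ) :
    (kron5 fun m => c m • M m) = (∏ m, c m) • kron5 M := by
  ext i j
  simp [kron5, Finset.prod_mul_distrib]

theorem kron5_one : kron5 (fun _ => 1) = 1 := by
  ext i j
  simp [kron5, Matrix.one_apply, Finset.prod_boole, funext_iff]

variable {M N}

theorem isSelfAdjoint_kron5 (hM : ∀ m, IsSelfAdjoint (M m)) : IsSelfAdjoint (kron5 M) := by
  rw [IsSelfAdjoint, Matrix.star_eq_conjTranspose, conjTranspose_kron5]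
  simp_rw [← Matrix.star_eq_conjTranspose, fun m => (hM m).star_eq]

theorem kron5_mul_self (hM : ∀ m, M m * M m = 1) : kron5 M * kron5 M = 1 := by
  simp_rw [kron5_mul, hM, kron5_one]

theorem commute_kron5 (ε : Fin 5 → ℂ) (hMN : ∀ m, M m * N m = ε m • (N m * M m))
    (hε : ∏ m, ε m = 1) : Commute (kron5 M) (kron5 N) := by
  rw [Commute, SemiconjBy, kron5_mul, kron5_mul]
  simp_rw [hMN, kron5_smul, hε, one_smul]

end Kron5

section StabilizerProjection

variable {A : Type*} [Ring A] [Algebra ℂ A]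

/-- The projection onto the common `+1`-eigenspace of commuting self-adjoint involutions. -/
noncomputable def stabilizerProj (gs : List A) : A :=
  (gs.map fun g => (2⁻¹ : ℂ) • (1 + g)).prod

theorem half_one_add_mul_self {g : A} (hg : g * g = 1) :
    (2⁻¹ : ℂ) • (1 + g) * g = (2⁻¹ : ℂ) • (1 + g) := by
  rw [smul_mul_assoc, add_mul, one_mul, hg, add_comm]

theorem commute_stabilizerProj {x : A} {gs : List A} (h : ∀ g ∈ gs, Commute x g) :
    Commute x (stabilizerProj gs) :=
  Commute.list_prod_right _ _ fun _ hy => by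
    obtain ⟨g, hg, rfl⟩ := List.mem_map.mp hy
    exact ((Commute.one_right x).add_right (h g hg)).smul_right _

theorem stabilizerProj_mul_of_mem {gs : List A} (hinv : ∀ g ∈ gs, g * g = 1)
    (hcomm : gs.Pairwise Commute) {g : A} (hg : g ∈ gs) :
    stabilizerProj gs * g = stabilizerProj gs := by
  induction gs with
  | nil => simp at hg
  | cons h gs ih =>
    rw [List.forall_mem_cons] at hinv
    rw [List.pairwise_cons] at hcomm
    change (2⁻¹ : ℂ) • (1 + h) * stabilizerProj gs * g =
      (2⁻¹ : ℂ) • (1 + h) * stabilizerProj gs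
    rcases List.mem_cons.mp hg with rfl | hg
    · rw [mul_assoc, ← (commute_stabilizerProj hcomm.1).eq, ← mul_assoc,
        half_one_add_mul_self hinv.1]
    · rw [mul_assoc, ih hinv.2 hcomm.2 hg]

variable [StarRing A] [StarModule ℂ A]

theorem isStarProjection_half_one_add {g : A} (hsa : IsSelfAdjoint g) (hg : g * g = 1) :
    IsStarProjection ((2⁻¹ : ℂ) • (1 + g)) where
  isIdempotentElem := by
    rw [IsIdempotentElem, mul_smul_comm, mul_add, mul_one, half_one_add_mul_self hg,
      ← two_smul ℂ, smul_smul]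
    norm_num
  isSelfAdjoint := .smul (by simp [IsSelfAdjoint]) ((IsSelfAdjoint.one A).add hsa)

theorem isStarProjection_stabilizerProj {gs : List A} (hsa : ∀ g ∈ gs, IsSelfAdjoint g)
    (hinv : ∀ g ∈ gs, g * g = 1) (hcomm : gs.Pairwise Commute) :
    IsStarProjection (stabilizerProj gs) := by
  induction gs with
  | nil => exact IsStarProjection.one A
  | cons g gs ih =>
    rw [List.forall_mem_cons] at hsa hinv
    rw [List.pairwise_cons] at hcomm
    refine (isStarProjection_half_one_add hsa.1 hinv.1).mul (ih hsa.2 hinv.2 hcomm.2) ?_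
    refine commute_stabilizerProj fun h hh => ?_
    exact ((Commute.one_left h).add_left (hcomm.1 h hh)).smul_left _

end StabilizerProjection

theorem Matrix.posSemidef_of_isStarProjection {n : Type*} [Fintype n] {P : Matrix n n ℂ}
    (hP : IsStarProjection P) : P.PosSemidef := by
  simpa [← Matrix.star_eq_conjTranspose, hP.isSelfAdjoint.star_eq, hP.isIdempotentElem.eq]
    using Matrix.posSemidef_conjTranspose_mul_self P

theorem isDensityMatrix_inv_trace_smul {n : Type*} [Fintype n] [DecidableEq n]
    {P : Matrix n n ℂ} (hP : P.PosSemidef) (htr : P.trace ≠ 0) :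
    IsDensityMatrix (P.trace⁻¹ • P) :=
  ⟨hP.smul (inv_nonneg.mpr hP.trace_nonneg), by
    rw [Matrix.trace_smul, smul_eq_mul, inv_mul_cancel₀ htr]⟩

/-- The stabilizer generators `zxxz1, xxz1z, xz1zx, z1zxx, 1zxxz` of the five-qubit code. -/
noncomputable def codeStabilizers : List (Matrix (Fin 5 → Fin 2) (Fin 5 → Fin 2) ℂ) :=
  [kron5 ![pauli3, pauli1, pauli1, pauli3, pauli0],
   kron5 ![pauli1, pauli1, pauli3, pauli0, pauli3],
   kron5 ![pauli1, pauli3, pauli0, pauli3, pauli1],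
   kron5 ![pauli3, pauli0, pauli3, pauli1, pauli1],
   kron5 ![pauli0, pauli3, pauli1, pauli1, pauli3]]

theorem isSelfAdjoint_of_mem_codeStabilizers :
    ∀ g ∈ codeStabilizers, IsSelfAdjoint g := by
  simp only [codeStabilizers, List.forall_mem_cons, List.not_mem_nil, IsEmpty.forall_iff,
    implies_true, and_true]
  refine ⟨?_, ?_, ?_, ?_, ?_⟩ <;> refine isSelfAdjoint_kron5 fun m => ?_ <;> fin_cases m <;>
    simp [pauli0, isSelfAdjoint_pauli1, isSelfAdjoint_pauli3]

theorem mul_self_of_mem_codeStabilizers : ∀ g ∈ codeStabilizers, g * g = 1 := by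
  simp only [codeStabilizers, List.forall_mem_cons, List.not_mem_nil, IsEmpty.forall_iff,
    implies_true, and_true]
  refine ⟨?_, ?_, ?_, ?_, ?_⟩ <;> refine kron5_mul_self fun m => ?_ <;> fin_cases m <;>
    simp [pauli0, pauli1_mul_self, pauli3_mul_self]

theorem codeStabilizers_pairwise_commute : codeStabilizers.Pairwise Commute := by
  simp only [codeStabilizers, List.pairwise_cons, List.mem_cons, List.not_mem_nil, or_false,
    forall_eq_or_imp, forall_eq, false_implies, implies_true, List.Pairwise.nil, and_true]
  -- each sign vector is `-1` exactly at the sites where one word has `x` and the other `z`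
  refine ⟨⟨commute_kron5 ![-1, 1, -1, 1, 1] ?_ ?_, commute_kron5 ![-1, -1, 1, 1, 1] ?_ ?_,
      commute_kron5 ![1, 1, -1, -1, 1] ?_ ?_, commute_kron5 ![1, -1, 1, -1, 1] ?_ ?_⟩,
    ⟨commute_kron5 ![1, -1, 1, 1, -1] ?_ ?_, commute_kron5 ![-1, 1, 1, 1, -1] ?_ ?_,
      commute_kron5 ![1, -1, -1, 1, 1] ?_ ?_⟩,
    ⟨commute_kron5 ![-1, 1, 1, -1, 1] ?_ ?_, commute_kron5 ![1, 1, 1, -1, -1] ?_ ?_⟩,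
    commute_kron5 ![1, 1, -1, 1, -1] ?_ ?_⟩
  all_goals first
    | simp [Fin.prod_univ_five]
    | intro m; fin_cases m <;> simp [pauli0, pauli1_mul_pauli3, pauli3_mul_pauli1]

theorem trace_stabilizerProj_codeStabilizers : (stabilizerProj codeStabilizers).trace = 2 := by
  simp only [stabilizerProj, codeStabilizers, List.map_cons, List.map_nil, List.prod_cons,
    List.prod_nil, mul_one, smul_mul_smul_comm, Matrix.trace_smul, add_mul, mul_add, one_mul,
    Matrix.trace_add, kron5_mul, trace_kron5, Fin.prod_univ_five]
  simp [pauli0, pauli1_mul_self, pauli3_mul_self, pauli1_mul_pauli3, pauli3_mul_pauli1,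
    pauli1_mul_pauli13, pauli3_mul_pauli13, trace_pauli1, trace_pauli3, trace_pauli13]
  norm_num

theorem sigmaOp_one_mem_codeStabilizers (k : Fin 5) : sigmaOp 1 k ∈ codeStabilizers := by
  have eta (f : Fin 5 → Matrix (Fin 2) (Fin 2) ℂ) : f = ![f 0, f 1, f 2, f 3, f 4] := by
    ext m : 1; fin_cases m <;> rfl
  rw [sigmaOp, eta fun m => baseWord 1 (m + k)]
  fin_cases k <;> simp [codeStabilizers, baseWord]

theorem sum_sigmaOp_one_le_Q (ρ : Matrix (Fin 5 → Fin 2) (Fin 5 → Fin 2) ℂ) :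
    ∑ k : Fin 5, ((ρ * sigmaOp 1 k).trace.re) ^ 2 ≤ Q ρ :=
  Finset.single_le_sum (f := fun w => ∑ k : Fin 5, ((ρ * sigmaOp w k).trace.re) ^ 2)
    (fun _ _ => Finset.sum_nonneg fun _ _ => sq_nonneg _) (Finset.mem_univ 1)

/-- (i) The five operators `zxxz1`, `xxz1z`, `xz1zx`, `z1zxx`, `1zxxz` pairwise
commute, and (ii) there is a 5-qubit density matrix with `Q(ρ) ≥ 5`. -/
theorem clique_five_and_Q_ge_five :
    (∀ s ∈ [kron5 ![pauli3, pauli1, pauli1, pauli3, pauli0],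
            kron5 ![pauli1, pauli1, pauli3, pauli0, pauli3],
            kron5 ![pauli1, pauli3, pauli0, pauli3, pauli1],
            kron5 ![pauli3, pauli0, pauli3, pauli1, pauli1],
            kron5 ![pauli0, pauli3, pauli1, pauli1, pauli3]],
      ∀ t ∈ [kron5 ![pauli3, pauli1, pauli1, pauli3, pauli0],
             kron5 ![pauli1, pauli1, pauli3, pauli0, pauli3],
             kron5 ![pauli1, pauli3, pauli0, pauli3, pauli1],
             kron5 ![pauli3, pauli0, pauli3, pauli1, pauli1],
             kron5 ![pauli0, pauli3, pauli1, pauli1, pauli3]],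
        s * t = t * s) ∧
    (∃ ρ : Matrix (Fin 5 → Fin 2) (Fin 5 → Fin 2) ℂ,
      IsDensityMatrix ρ ∧ 5 ≤ Q ρ) := by
  refine ⟨fun s hs t ht =>
    codeStabilizers_pairwise_commute.forall_of_forall (fun _ _ => Commute.refl _) hs ht, ?_⟩
  set P := stabilizerProj codeStabilizers
  have hP : IsStarProjection P := isStarProjection_stabilizerProj
    isSelfAdjoint_of_mem_codeStabilizers mul_self_of_mem_codeStabilizers
    codeStabilizers_pairwise_commute
  have hρ : IsDensityMatrix (P.trace⁻¹ • P) :=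
    isDensityMatrix_inv_trace_smul (Matrix.posSemidef_of_isStarProjection hP)
      (by rw [trace_stabilizerProj_codeStabilizers]; norm_num)
  have hexp (k : Fin 5) : (P.trace⁻¹ • P * sigmaOp 1 k).trace = 1 := by
    rw [smul_mul_assoc, stabilizerProj_mul_of_mem mul_self_of_mem_codeStabilizers
      codeStabilizers_pairwise_commute (sigmaOp_one_mem_codeStabilizers k), hρ.2]
  refine ⟨_, hρ, ?_⟩
  calc (5 : ℝ) = ∑ k : Fin 5, ((P.trace⁻¹ • P * sigmaOp 1 k).trace.re) ^ 2 := by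
        simp only [hexp]; norm_num
    _ ≤ Q _ := sum_sigmaOp_one_le_Q _
end

section
/- Let σ₃-set = {x⊗x⊗x, y⊗x⊗x, x⊗y⊗x, y⊗y⊗x, x⊗x⊗y, y⊗x⊗y, x⊗y⊗y, y⊗y⊗y} be the 8 three-fold Kronecker products of x = σ₁ and y = σ₂, and for an 8×8 density matrix ρ define Q(ρ) = ∑_{s∈σ₃-set} (Re(trace(ρ * s)))². Then for every 3-qubit state separable with respect to the cut (A|BC) — i.e., every ρ = ∑_k p_k • (ρ_k^A ⊗ ρ_k^{BC}) with p_k ≥ 0, ∑_k p_k = 1, ρ_k^A a 2×2 density matrix, and ρ_k^{BC} a 4×4 density matrix — one has Q(ρ) ≤ 2. -/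
open Matrix
open ComplexOrder

/-- The Pauli matrix `x = σ₁`. -/
noncomputable def pauliX : Matrix (Fin 2) (Fin 2) ℂ := !![0, 1; 1, 0]

/-- The Pauli matrix `y = σ₂`. -/
noncomputable def pauliY : Matrix (Fin 2) (Fin 2) ℂ := !![0, -Complex.I; Complex.I, 0]

/-- `![x, y]`: chooses `x` or `y`. -/
noncomputable def xy : Fin 2 → Matrix (Fin 2) (Fin 2) ℂ := ![pauliX, pauliY]

/-- The three-fold Kronecker product of single-qubit matrices, as an 8×8 matrix
indexed by `Fin 3 → Fin 2`. -/
noncomputable def kron3 (M : Fin 3 → Matrix (Fin 2) (Fin 2) ℂ) :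
    Matrix (Fin 3 → Fin 2) (Fin 3 → Fin 2) ℂ :=
  Matrix.of fun i j => ∏ m, M m (i m) (j m)

/-- `Q(ρ) = ∑_{s ∈ σ} (Re tr(ρ s))²`, where σ is the set of the 8 (pairwise
distinct) three-fold tensor products of `x` and `y`:
`{xxx, yxx, xyx, yyx, xxy, yxy, xyy, yyy}`. -/
noncomputable def Q3 (ρ : Matrix (Fin 3 → Fin 2) (Fin 3 → Fin 2) ℂ) : ℝ :=
  ∑ f : Fin 3 → Fin 2, ((ρ * kron3 (fun m => xy (f m))).trace.re) ^ 2

/-!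
`Q` is convex in `ρ`, being a sum of squares of real-linear functionals, so it suffices to bound
it on product states `ρᴬ ⊗ ρᴮᶜ`. There every term factorises,
`tr((ρᴬ ⊗ ρᴮᶜ)(s₁ ⊗ s₂₃)) = tr(ρᴬ s₁) tr(ρᴮᶜ s₂₃)`, so `Q` is the product of
`∑ₐ tr(ρᴬ σₐ)²` and `∑ tr(ρᴮᶜ s₂₃)²`. These are at most `1` and `2`: if `A`, `B` are
anticommuting Hermitian involutions then `⟨A⟩² + ⟨B⟩² ≤ 1`, because `C = ⟨A⟩A + ⟨B⟩B` has
`C² = (⟨A⟩² + ⟨B⟩²)·1` and `⟨C⟩² ≤ ⟨C²⟩`; the `2ⁿ⁺¹` products of `x` and `y` on `n + 1`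
qubits split into `2ⁿ` anticommuting pairs `{x ⊗ s, y ⊗ s}`, which bounds their sum by `2ⁿ`.
-/

open scoped Kronecker

theorem Fin.sum_pi_succ {α M : Type*} [Fintype α] [AddCommMonoid M] {n : ℕ}
    (F : (Fin (n + 1) → α) → M) : ∑ f, F f = ∑ a, ∑ t : Fin n → α, F (Fin.cons a t) := by
  rw [← (Fin.consEquiv fun _ => α).sum_comp, Fintype.sum_prod_type]
  rfl

namespace Matrix

theorem trace_reindex {m n R : Type*} [Fintype m] [Fintype n] [AddCommMonoid R] (e : m ≃ n)
    (A : Matrix m m R) : (reindex e e A).trace = A.trace := by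
  simp only [trace, diag, reindex_apply, submatrix_apply]
  exact e.symm.sum_comp fun i => A i i

theorem IsHermitian.im_trace_mul_eq_zero {n : Type*} [Fintype n] {A B : Matrix n n ℂ}
    (hA : A.IsHermitian) (hB : B.IsHermitian) : (A * B).trace.im = 0 := by
  rw [← Complex.conj_eq_iff_im, ← Complex.star_def, ← trace_conjTranspose, conjTranspose_mul,
    hA.eq, hB.eq, trace_mul_comm]

section kroneckerCons

variable {α R : Type*} {n : ℕ}

def kroneckerCons [Mul R] (A : Matrix α α R) (B : Matrix (Fin n → α) (Fin n → α) R) :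
    Matrix (Fin (n + 1) → α) (Fin (n + 1) → α) R :=
  reindex (Fin.consEquiv fun _ => α) (Fin.consEquiv fun _ => α) (A ⊗ₖ B)

theorem kroneckerCons_mul_kroneckerCons [Fintype α] [CommSemiring R] (A C : Matrix α α R)
    (B D : Matrix (Fin n → α) (Fin n → α) R) :
    kroneckerCons A B * kroneckerCons C D = kroneckerCons (A * C) (B * D) := by
  rw [kroneckerCons, kroneckerCons, kroneckerCons, reindex_apply, reindex_apply, reindex_apply,
    submatrix_mul_equiv, mul_kronecker_mul]

theorem trace_kroneckerCons [Fintype α] [Semiring R] (A : Matrix α α R)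
    (B : Matrix (Fin n → α) (Fin n → α) R) :
    (kroneckerCons A B).trace = A.trace * B.trace := by
  rw [kroneckerCons, trace_reindex, trace_kronecker]

end kroneckerCons

section kronPi

variable {ι α R : Type*} [Fintype ι]

def kronPi [CommMonoid R] (M : ι → Matrix α α R) : Matrix (ι → α) (ι → α) R :=
  of fun i j => ∏ m, M m (i m) (j m)

theorem kronPi_mul_kronPi [DecidableEq ι] [Fintype α] [CommSemiring R] (M N : ι → Matrix α α R) :
    kronPi M * kronPi N = kronPi fun m => M m * N m := by
  ext i j
  simp only [kronPi, mul_apply, of_apply, Fintype.prod_sum, Finset.prod_mul_distrib]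

theorem kronPi_one [DecidableEq ι] [DecidableEq α] [CommSemiring R] :
    kronPi (fun _ : ι => (1 : Matrix α α R)) = 1 := by
  ext i j
  by_cases h : i = j
  · subst h
    simp [kronPi]
  · obtain ⟨m, hm⟩ := Function.ne_iff.mp h
    simp only [kronPi, of_apply, one_apply, h, if_false]
    exact Finset.prod_eq_zero (Finset.mem_univ m) (if_neg hm)

theorem conjTranspose_kronPi [CommSemiring R] [StarRing R] (M : ι → Matrix α α R) :
    (kronPi M)ᴴ = kronPi fun m => (M m)ᴴ := by
  ext i j
  simp [kronPi, star_prod]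

theorem kronPi_eq_kroneckerCons {n : ℕ} [CommMonoid R] (M : Fin (n + 1) → Matrix α α R) :
    kronPi M = kroneckerCons (M 0) (kronPi (Fin.tail M)) := by
  ext i j
  simp [kronPi, kroneckerCons, Fin.prod_univ_succ, Fin.tail]

theorem trace_kroneckerCons_mul_kronPi [Fintype α] [CommSemiring R] {n : ℕ} (A : Matrix α α R)
    (B : Matrix (Fin n → α) (Fin n → α) R) (M : Fin (n + 1) → Matrix α α R) :
    (kroneckerCons A B * kronPi M).trace = (A * M 0).trace * (B * kronPi (Fin.tail M)).trace := by
  rw [kronPi_eq_kroneckerCons, kroneckerCons_mul_kroneckerCons, trace_kroneckerCons]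

theorem kronPi_mul_kronPi_of_anticommute_zero [Fintype α] [CommRing R] {n : ℕ}
    {M N : Fin (n + 1) → Matrix α α R} (h0 : M 0 * N 0 = -(N 0 * M 0))
    (hsucc : ∀ m : Fin n, M m.succ * N m.succ = N m.succ * M m.succ) :
    kronPi M * kronPi N = -(kronPi N * kronPi M) := by
  rw [kronPi_mul_kronPi, kronPi_mul_kronPi]
  ext i j
  simp only [kronPi, of_apply, neg_apply, Fin.prod_univ_succ, h0, hsucc, neg_mul]

end kronPi

theorem PosSemidef.sq_re_trace_mul_le {n : Type*} [Fintype n] [DecidableEq n]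
    {ρ C : Matrix n n ℂ} (hρ : ρ.PosSemidef) (htr : ρ.trace = 1) (hC : C.IsHermitian) :
    (ρ * C).trace.re ^ 2 ≤ (ρ * (C * C)).trace.re := by
  set t := (ρ * C).trace.re
  set D := C - t • (1 : Matrix n n ℂ)
  have hD : Dᴴ = D := (hC.sub (isHermitian_one.smul (IsSelfAdjoint.all t))).eq
  have hvar : 0 ≤ (ρ * (D * D)).trace.re := by
    have h := (hρ.conjTranspose_mul_mul_same D).trace_nonneg
    rw [hD, Matrix.mul_assoc, trace_mul_comm, Matrix.mul_assoc] at h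
    exact (Complex.nonneg_iff.mp h).1
  have hexp : (ρ * (D * D)).trace.re = (ρ * (C * C)).trace.re - t ^ 2 := by
    simp only [D, Matrix.sub_mul, Matrix.mul_sub, Matrix.smul_mul, Matrix.mul_smul,
      Matrix.one_mul, Matrix.mul_one, trace_sub, trace_smul, htr, Complex.sub_re,
      Complex.real_smul, Complex.re_ofReal_mul, Complex.one_re]
    ring
  linarith

end Matrix

open Matrix

theorem IsDensityMatrix.sq_add_sq_re_trace_mul_le_one {n : Type*} [Fintype n] [DecidableEq n]
    {ρ A B : Matrix n n ℂ} (hρ : IsDensityMatrix ρ) (hA : A.IsHermitian) (hB : B.IsHermitian)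
    (hA2 : A * A = 1) (hB2 : B * B = 1) (hAB : A * B = -(B * A)) :
    (ρ * A).trace.re ^ 2 + (ρ * B).trace.re ^ 2 ≤ 1 := by
  set a := (ρ * A).trace.re
  set b := (ρ * B).trace.re
  set C := a • A + b • B
  have hC : C.IsHermitian := (hA.smul (IsSelfAdjoint.all a)).add (hB.smul (IsSelfAdjoint.all b))
  have hC2 : C * C = (a ^ 2 + b ^ 2) • (1 : Matrix n n ℂ) := by
    simp only [C, Matrix.add_mul, Matrix.mul_add, Matrix.smul_mul, Matrix.mul_smul, hA2, hB2, hAB]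
    module
  have h := hρ.1.sq_re_trace_mul_le hρ.2 hC
  simp only [hC2, C, Matrix.mul_add, Matrix.mul_smul, Matrix.mul_one, trace_add, trace_smul, hρ.2,
    Complex.add_re, Complex.smul_re, Complex.one_re, smul_eq_mul] at h
  nlinarith [sq_nonneg a, sq_nonneg b]

theorem xy_isHermitian (a : Fin 2) : (xy a).IsHermitian := by
  ext i j
  fin_cases a <;> fin_cases i <;> fin_cases j <;> simp [xy, pauliX, pauliY]

theorem xy_mul_self (a : Fin 2) : xy a * xy a = 1 := by
  ext i j
  fin_cases a <;> fin_cases i <;> fin_cases j <;> simp [xy, pauliX, pauliY, one_apply]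

theorem pauliX_mul_pauliY_eq_neg : pauliX * pauliY = -(pauliY * pauliX) := by
  ext i j
  fin_cases i <;> fin_cases j <;> simp [pauliX, pauliY]

theorem kronPi_xy_isHermitian {ι : Type*} [Fintype ι] (f : ι → Fin 2) :
    (kronPi fun m => xy (f m)).IsHermitian := by
  simp only [IsHermitian, conjTranspose_kronPi, (xy_isHermitian _).eq]

theorem kronPi_xy_mul_self {ι : Type*} [Fintype ι] [DecidableEq ι] (f : ι → Fin 2) :
    (kronPi fun m => xy (f m)) * (kronPi fun m => xy (f m)) = 1 := by
  simp only [kronPi_mul_kronPi, xy_mul_self, kronPi_one]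

theorem IsDensityMatrix.sum_sq_re_trace_mul_xy_le_one {A : Matrix (Fin 2) (Fin 2) ℂ}
    (hA : IsDensityMatrix A) : ∑ a, (A * xy a).trace.re ^ 2 ≤ 1 := by
  rw [Fin.sum_univ_two]
  exact hA.sq_add_sq_re_trace_mul_le_one (xy_isHermitian 0) (xy_isHermitian 1) (xy_mul_self 0)
    (xy_mul_self 1) pauliX_mul_pauliY_eq_neg

theorem IsDensityMatrix.sum_sq_re_trace_mul_kronPi_xy_le {n : ℕ}
    {σ : Matrix (Fin (n + 1) → Fin 2) (Fin (n + 1) → Fin 2) ℂ} (hσ : IsDensityMatrix σ) :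
    ∑ f : Fin (n + 1) → Fin 2, (σ * kronPi fun m => xy (f m)).trace.re ^ 2 ≤ 2 ^ n := by
  rw [Fin.sum_pi_succ, Finset.sum_comm]
  refine (Finset.sum_le_sum fun t _ => ?_).trans_eq (b := ∑ _t : Fin n → Fin 2, (1 : ℝ)) ?_
  · rw [Fin.sum_univ_two]
    exact hσ.sq_add_sq_re_trace_mul_le_one (kronPi_xy_isHermitian _) (kronPi_xy_isHermitian _)
      (kronPi_xy_mul_self _) (kronPi_xy_mul_self _)
      (kronPi_mul_kronPi_of_anticommute_zero pauliX_mul_pauliY_eq_neg fun _ => rfl)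
  · simp

theorem convexOn_sq_re_trace_mul {n : Type*} [Fintype n] (S : Matrix n n ℂ) :
    ConvexOn ℝ Set.univ fun ρ : Matrix n n ℂ => (ρ * S).trace.re ^ 2 :=
  (even_two.convexOn_pow (𝕜 := ℝ)).comp_linearMap
    (Complex.reLm ∘ₗ traceLinearMap n ℝ ℂ ∘ₗ LinearMap.mulRight ℝ S)

theorem kron3_eq_kronPi (M : Fin 3 → Matrix (Fin 2) (Fin 2) ℂ) : kron3 M = kronPi M := rfl

theorem convexOn_Q3 : ConvexOn ℝ Set.univ Q3 := by
  have hQ3 : Q3 = ∑ f : Fin 3 → Fin 2, fun ρ => (ρ * kron3 fun m => xy (f m)).trace.re ^ 2 := by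
    ext ρ
    simp only [Q3, Finset.sum_apply]
  rw [hQ3]
  exact Finset.sum_induction _ (ConvexOn ℝ Set.univ) (fun _ _ => ConvexOn.add)
    (convexOn_const 0 convex_univ) fun f _ => convexOn_sq_re_trace_mul _

theorem Q3_kroneckerCons {A : Matrix (Fin 2) (Fin 2) ℂ}
    (B : Matrix (Fin 2 → Fin 2) (Fin 2 → Fin 2) ℂ) (hA : A.IsHermitian) :
    Q3 (kroneckerCons A B) =
      (∑ a, (A * xy a).trace.re ^ 2) *
        ∑ g : Fin 2 → Fin 2, (B * kronPi fun m => xy (g m)).trace.re ^ 2 := by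
  rw [Q3, Fin.sum_pi_succ, Finset.sum_mul_sum]
  refine Finset.sum_congr rfl fun a _ => Finset.sum_congr rfl fun g _ => ?_
  rw [kron3_eq_kronPi, trace_kroneckerCons_mul_kronPi, Complex.mul_re,
    hA.im_trace_mul_eq_zero (xy_isHermitian _), zero_mul, sub_zero, mul_pow]
  rfl

theorem Q3_kroneckerCons_le_two {A : Matrix (Fin 2) (Fin 2) ℂ}
    {B : Matrix (Fin 2 → Fin 2) (Fin 2 → Fin 2) ℂ} (hA : IsDensityMatrix A)
    (hB : IsDensityMatrix B) : Q3 (kroneckerCons A B) ≤ 2 := by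
  rw [Q3_kroneckerCons B hA.1.isHermitian]
  calc _ ≤ 1 * 2 ^ 1 := mul_le_mul hA.sum_sq_re_trace_mul_xy_le_one
          hB.sum_sq_re_trace_mul_kronPi_xy_le (by positivity) zero_le_one
    _ = 2 := by norm_num

/-- For every 3-qubit state separable with respect to the cut `(A|BC)`,
`Q(ρ) ≤ 2`. -/
theorem three_qubit_cut_A_BC_separable_Q_le_two {K : ℕ}
    (p : Fin K → ℝ) (hp : ∀ k, 0 ≤ p k) (hp1 : ∑ k, p k = 1)
    (ρA : Fin K → Matrix (Fin 2) (Fin 2) ℂ)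
    (ρBC : Fin K → Matrix (Fin 2 → Fin 2) (Fin 2 → Fin 2) ℂ)
    (hρA : ∀ k, IsDensityMatrix (ρA k)) (hρBC : ∀ k, IsDensityMatrix (ρBC k))
    (ρ : Matrix (Fin 3 → Fin 2) (Fin 3 → Fin 2) ℂ)
    (hρ : ∀ i j, ρ i j = ∑ k, (p k : ℂ) *
      (ρA k (i 0) (j 0) * ρBC k (fun m => i m.succ) (fun m => j m.succ))) :
    Q3 ρ ≤ 2 := by
  have hρ_eq : ρ = ∑ k, p k • kroneckerCons (ρA k) (ρBC k) := by
    ext i j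
    simp only [hρ, kroneckerCons, reindex_apply, Matrix.sum_apply, Matrix.smul_apply,
      submatrix_apply, Fin.consEquiv_symm_apply, kroneckerMap_apply, Complex.real_smul]
    rfl
  calc Q3 ρ ≤ ∑ k, p k • Q3 (kroneckerCons (ρA k) (ρBC k)) :=
        hρ_eq ▸ convexOn_Q3.map_sum_le (fun k _ => hp k) hp1 fun _ _ => Set.mem_univ _
    _ ≤ ∑ k, p k • (2 : ℝ) := Finset.sum_le_sum fun k _ =>
        smul_le_smul_of_nonneg_left (Q3_kroneckerCons_le_two (hρA k) (hρBC k)) (hp k)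
    _ = 2 := by rw [← Finset.sum_smul, hp1, one_smul]
end
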